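/- For every natural number k, if ρ^k·(1/2 − ρ) < ε < ρ^k·√(1/3 − ρ + ρ² − ρ³ + ρ⁴), then the complement ℝ² \ S_ε has at least 3^k distinct connected components that are bounded sets. -/

import Mathlib

open Metric Set Bornology

/-- The vertices of the unit equilateral triangle. -/
noncomputable def v0 : EuclideanSpace ℝ (Fin 2) :=
  (WithLp.equiv 2 (Fin 2 → ℝ)).symm ![0, 0]

noncomputable def v1 : EuclideanSpace ℝ (Fin 2) :=
  (WithLp.equiv 2 (Fin 2 → ℝ)).symm ![1, 0]

noncomputable def v2 : EuclideanSpace ℝ (Fin 2) :=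
  (WithLp.equiv 2 (Fin 2 → ℝ)).symm ![1 / 2, Real.sqrt 3 / 2]

/-- The homothety with center `v0` (resp. `v1`, `v2`) and ratio `ρ`. -/
noncomputable def f0 (ρ : ℝ) (x : EuclideanSpace ℝ (Fin 2)) : EuclideanSpace ℝ (Fin 2) :=
  v0 + ρ • (x - v0)

noncomputable def f1 (ρ : ℝ) (x : EuclideanSpace ℝ (Fin 2)) : EuclideanSpace ℝ (Fin 2) :=
  v1 + ρ • (x - v1)

noncomputable def f2 (ρ : ℝ) (x : EuclideanSpace ℝ (Fin 2)) : EuclideanSpace ℝ (Fin 2) :=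
  v2 + ρ • (x - v2)

/-- The union of the images of a set under the three homotheties. -/
noncomputable def sierpPhi (ρ : ℝ) (X : Set (EuclideanSpace ℝ (Fin 2))) :
    Set (EuclideanSpace ℝ (Fin 2)) :=
  f0 ρ '' X ∪ f1 ρ '' X ∪ f2 ρ '' X

/-- The filled equilateral triangle. -/
noncomputable def sierpT : Set (EuclideanSpace ℝ (Fin 2)) :=
  convexHull ℝ {v0, v1, v2}

/-- The generalized Sierpinski triangle with contraction ratio `ρ`. -/
noncomputable def sierpinski (ρ : ℝ) : Set (EuclideanSpace ℝ (Fin 2)) :=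
  ⋂ k : ℕ, (sierpPhi ρ)^[k] sierpT

/-!
Fix a word `w` of length `k` and let `c_w = f_w(c)` be the centroid of the small triangle `f_w(T)`.

The edges of `f_w(T)` lie in `S_ε`. Indeed an edge `[vₐ, v_b]` of `T` is
`fₐ(edge) ∪ gap ∪ f_b(edge)`, with a middle gap of length `1 - 2ρ` whose endpoints lie in `S`.
Iterating, every point of the edge is within `1/2 - ρ` of `S`, up to an arbitrarily small error,
and `f_w` scales this by `ρᵏ`.

The centroid `c_w` is not in `S_ε`. In barycentric coordinates `λ`, the squared distance is
`½ ∑ (Δλᵢ)²`. The point of `Φ²(T)` closest to `c` is `fₐ(f_b(v_c))` for distinct `a, b, c`, at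
distance `√(1/3 - ρ + ρ² - ρ³ + ρ⁴)`; this scales to `ρᵏ √(…)` around `c_w`. The other level-`k`
triangles are kept even farther from `c_w` by the coordinate `λⱼ` of the first letter where the
words differ.

Hence the component of `c_w` in `ℝ² \ S_ε` cannot leave `f_w(T)`: it is bounded, and the `3ᵏ`
components are distinct because `c_u ∉ f_w(T)` for `u ≠ w`.
-/

lemma connectedComponentIn_subset_of_disjoint_frontier {X : Type*} [TopologicalSpace X]
    {U K : Set X} {x : X} (hx : x ∈ K) (hUK : Disjoint U (frontier K)) :
    connectedComponentIn U x ⊆ K := by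
  by_cases hxU : x ∈ U
  swap
  · simp [connectedComponentIn_eq_empty hxU]
  have hxK : x ∈ interior K := by
    by_contra h
    exact hUK.ne_of_mem hxU ⟨subset_closure hx, h⟩ rfl
  refine (isPreconnected_connectedComponentIn.subset_of_closure_inter_subset isOpen_interior
    ⟨x, mem_connectedComponentIn hxU, hxK⟩ ?_).trans interior_subset
  rintro y ⟨hyK, hyC⟩
  by_contra h
  exact hUK.ne_of_mem (connectedComponentIn_subset _ _ hyC)
    ⟨closure_mono interior_subset hyK, h⟩ rfl

namespace Sierpinski

local notation "ℝ²" => EuclideanSpace ℝ (Fin 2)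

noncomputable def vertex : Fin 3 → ℝ² := ![v0, v1, v2]

noncomputable def centroid : ℝ² := (WithLp.equiv 2 (Fin 2 → ℝ)).symm ![1 / 2, √3 / 6]

/-- Barycentric coordinates with respect to `v0`, `v1`, `v2`. -/
noncomputable def bary (i : Fin 3) (p : ℝ²) : ℝ :=
  ![1 - p 0 - √3 / 3 * p 1, p 0 - √3 / 3 * p 1, 2 * √3 / 3 * p 1] i

lemma sqrt_three_sq : √3 ^ 2 = 3 := Real.sq_sqrt (by norm_num)

lemma bary_vertex (i j : Fin 3) : bary i (vertex j) = if i = j then 1 else 0 := by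
  fin_cases i <;> fin_cases j <;> simp [bary, vertex, v0, v1, v2] <;> grind [sqrt_three_sq]

lemma bary_vertex_nonneg (i j : Fin 3) : 0 ≤ bary i (vertex j) := by
  rw [bary_vertex]; split_ifs <;> norm_num

lemma bary_vertex_le_one (i j : Fin 3) : bary i (vertex j) ≤ 1 := by
  rw [bary_vertex]; split_ifs <;> norm_num

lemma bary_centroid (i : Fin 3) : bary i centroid = 1 / 3 := by
  fin_cases i <;> simp [bary, centroid] <;> grind [sqrt_three_sq]

lemma sum_bary (p : ℝ²) : ∑ i, bary i p = 1 := by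
  simp [Fin.sum_univ_three, bary]; ring

lemma sum_bary_smul_vertex (p : ℝ²) : ∑ i, bary i p • vertex i = p := by
  ext j
  fin_cases j <;> simp [Fin.sum_univ_three, bary, vertex, v0, v1, v2] <;> grind [sqrt_three_sq]

lemma bary_smul_add_smul (i : Fin 3) (x y : ℝ²) {a b : ℝ} (hab : a + b = 1) :
    bary i (a • x + b • y) = a * bary i x + b * bary i y := by
  obtain rfl : b = 1 - a := by linarith
  fin_cases i <;> simp [bary] <;> ring

lemma continuous_bary (i : Fin 3) : Continuous (bary i) := by
  unfold bary
  fin_cases i <;> simp <;> fun_prop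

lemma dist_sq_eq_sum_bary (p q : ℝ²) :
    dist p q ^ 2 = (∑ i, (bary i p - bary i q) ^ 2) / 2 := by
  rw [EuclideanSpace.dist_eq, Real.sq_sqrt (by positivity)]
  simp [Fin.sum_univ_three, Fin.sum_univ_two, bary, Real.dist_eq, sq_abs]
  grind [sqrt_three_sq]

lemma dist_sq_eq_bary {a b : Fin 3} (hab : a ≠ b) (p q : ℝ²) :
    dist p q ^ 2 = (bary a p - bary a q) ^ 2 + (bary a p - bary a q) * (bary b p - bary b q) +
      (bary b p - bary b q) ^ 2 := by
  have hp := sum_bary p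
  have hq := sum_bary q
  rw [dist_sq_eq_sum_bary]
  simp only [Fin.sum_univ_three] at hp hq ⊢
  fin_cases a <;> fin_cases b <;> simp at hab ⊢ <;> grind

lemma bary_sub_le_dist (i : Fin 3) (p q : ℝ²) : √3 / 2 * (bary i p - bary i q) ≤ dist p q := by
  obtain ⟨j, hji⟩ := exists_ne i
  have := dist_sq_eq_bary hji.symm p q
  nlinarith [sqrt_three_sq, dist_nonneg (x := p) (y := q), Real.sqrt_nonneg 3,
    sq_nonneg (bary j p - bary j q + (bary i p - bary i q) / 2)]

lemma dist_vertex {a b : Fin 3} (hab : a ≠ b) : dist (vertex a) (vertex b) = 1 := by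
  have h : dist (vertex a) (vertex b) ^ 2 = 1 := by
    rw [dist_sq_eq_sum_bary]
    fin_cases a <;> fin_cases b <;> simp_all [Fin.sum_univ_three, bary_vertex]
  exact (pow_eq_one_iff_of_nonneg dist_nonneg two_ne_zero).1 h

lemma vertex_mem_sierpT (i : Fin 3) : vertex i ∈ sierpT := by
  fin_cases i <;> exact subset_convexHull ℝ _ (by simp [vertex])

lemma mem_sierpT_iff {p : ℝ²} : p ∈ sierpT ↔ ∀ i, 0 ≤ bary i p := by
  constructor
  · refine fun hp => convexHull_min (t := {p | ∀ i, 0 ≤ bary i p}) ?_ ?_ hp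
    · rintro _ (rfl | rfl | rfl) i
      exacts [bary_vertex_nonneg i 0, bary_vertex_nonneg i 1, bary_vertex_nonneg i 2]
    · intro x hx y hy a b ha hb hab i
      rw [bary_smul_add_smul i x y hab]
      exact add_nonneg (mul_nonneg ha (hx i)) (mul_nonneg hb (hy i))
  · intro hp
    rw [← sum_bary_smul_vertex p]
    exact (convex_convexHull ℝ _).sum_mem (fun i _ => hp i) (sum_bary p)
      fun i _ => vertex_mem_sierpT i

lemma centroid_mem_sierpT : centroid ∈ sierpT :=
  mem_sierpT_iff.2 fun i => by rw [bary_centroid]; norm_num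

lemma isCompact_sierpT : IsCompact sierpT :=
  (Set.toFinite {v0, v1, v2}).isCompact_convexHull (𝕜 := ℝ)

noncomputable def f (ρ : ℝ) (i : Fin 3) (x : ℝ²) : ℝ² := vertex i + ρ • (x - vertex i)

variable {ρ : ℝ}

lemma f_eq_smul_add_smul (i : Fin 3) (x : ℝ²) : f ρ i x = (1 - ρ) • vertex i + ρ • x := by
  simp only [f]; module

lemma bary_f (i j : Fin 3) (x : ℝ²) :
    bary j (f ρ i x) = (1 - ρ) * bary j (vertex i) + ρ * bary j x := by
  rw [f_eq_smul_add_smul, bary_smul_add_smul _ _ _ (by ring)]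

lemma dist_f (hρ : 0 ≤ ρ) (i : Fin 3) (x y : ℝ²) : dist (f ρ i x) (f ρ i y) = ρ * dist x y := by
  rw [f, f, dist_add_left, dist_smul₀, dist_sub_right, Real.norm_of_nonneg hρ]

lemma f_vertex (i : Fin 3) : f ρ i (vertex i) = vertex i := by
  simp [f]

lemma f_lineMap_vertex (a b : Fin 3) (t : ℝ) :
    f ρ a (AffineMap.lineMap (vertex a) (vertex b) t) =
      AffineMap.lineMap (vertex a) (vertex b) (ρ * t) := by
  simp only [f, AffineMap.lineMap_apply_module]; module

lemma f_mem_sierpT (hρ0 : 0 ≤ ρ) (hρ1 : ρ ≤ 1) (i : Fin 3) {x : ℝ²} (hx : x ∈ sierpT) :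
    f ρ i x ∈ sierpT :=
  mem_sierpT_iff.2 fun j => by
    rw [bary_f]
    have := mem_sierpT_iff.1 hx j
    have := bary_vertex_nonneg j i
    have : 0 ≤ 1 - ρ := by linarith
    positivity

lemma mem_sierpPhi {X : Set ℝ²} {y : ℝ²} : y ∈ sierpPhi ρ X ↔ ∃ i, ∃ x ∈ X, f ρ i x = y := by
  simp [sierpPhi, Fin.exists_fin_succ, f0, f1, f2, f, vertex, or_assoc]

lemma monotone_sierpPhi : Monotone (sierpPhi ρ) := fun _ _ h =>
  union_subset_union (union_subset_union (image_mono h) (image_mono h)) (image_mono h)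

lemma sierpPhi_sierpT_subset (hρ0 : 0 ≤ ρ) (hρ1 : ρ ≤ 1) : sierpPhi ρ sierpT ⊆ sierpT := by
  intro y hy
  obtain ⟨i, x, hx, rfl⟩ := mem_sierpPhi.1 hy
  exact f_mem_sierpT hρ0 hρ1 i hx

lemma antitone_iterate_sierpPhi (hρ0 : 0 ≤ ρ) (hρ1 : ρ ≤ 1) :
    Antitone fun n => (sierpPhi ρ)^[n] sierpT :=
  antitone_nat_of_succ_le fun n => by
    rw [Function.iterate_succ_apply]
    exact monotone_sierpPhi.iterate n (sierpPhi_sierpT_subset hρ0 hρ1)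

lemma f_mem_sierpinski (hρ0 : 0 ≤ ρ) (hρ1 : ρ ≤ 1) (i : Fin 3) {x : ℝ²}
    (hx : x ∈ sierpinski ρ) : f ρ i x ∈ sierpinski ρ :=
  mem_iInter.2 fun n => antitone_iterate_sierpPhi hρ0 hρ1 n.le_succ <| by
    show f ρ i x ∈ (sierpPhi ρ)^[n + 1] sierpT
    rw [Function.iterate_succ_apply']
    exact mem_sierpPhi.2 ⟨i, x, mem_iInter.1 hx n, rfl⟩

lemma vertex_mem_sierpinski (i : Fin 3) : vertex i ∈ sierpinski ρ := by
  refine mem_iInter.2 fun n => ?_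
  induction n with
  | zero => exact vertex_mem_sierpT i
  | succ n ih =>
    rw [Function.iterate_succ_apply']
    exact mem_sierpPhi.2 ⟨i, _, ih, f_vertex i⟩

noncomputable def fWord (ρ : ℝ) : List (Fin 3) → ℝ² → ℝ²
  | [], x => x
  | i :: w, x => f ρ i (fWord ρ w x)

lemma exists_fWord_of_mem_iterate {X : Set ℝ²} {n : ℕ} {y : ℝ²}
    (hy : y ∈ (sierpPhi ρ)^[n] X) :
    ∃ w : List (Fin 3), w.length = n ∧ ∃ x ∈ X, fWord ρ w x = y := by
  induction n generalizing y with
  | zero => exact ⟨[], rfl, y, hy, rfl⟩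
  | succ n ih =>
    rw [Function.iterate_succ_apply'] at hy
    obtain ⟨i, z, hz, rfl⟩ := mem_sierpPhi.1 hy
    obtain ⟨w, hw, x, hx, rfl⟩ := ih hz
    exact ⟨i :: w, by simp [hw], x, hx, rfl⟩

lemma fWord_mem_sierpT (hρ0 : 0 ≤ ρ) (hρ1 : ρ ≤ 1) (w : List (Fin 3)) {x : ℝ²}
    (hx : x ∈ sierpT) : fWord ρ w x ∈ sierpT := by
  induction w with
  | nil => exact hx
  | cons i w ih => exact f_mem_sierpT hρ0 hρ1 i ih

lemma fWord_mem_sierpinski (hρ0 : 0 ≤ ρ) (hρ1 : ρ ≤ 1) (w : List (Fin 3)) {x : ℝ²}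
    (hx : x ∈ sierpinski ρ) : fWord ρ w x ∈ sierpinski ρ := by
  induction w with
  | nil => exact hx
  | cons i w ih => exact f_mem_sierpinski hρ0 hρ1 i ih

lemma dist_fWord (hρ : 0 ≤ ρ) (w : List (Fin 3)) (x y : ℝ²) :
    dist (fWord ρ w x) (fWord ρ w y) = ρ ^ w.length * dist x y := by
  induction w with
  | nil => simp [fWord]
  | cons i w ih => rw [fWord, fWord, dist_f hρ, ih, List.length_cons, pow_succ']; ring

lemma fWord_eq_add_smul (w : List (Fin 3)) (x : ℝ²) :
    fWord ρ w x = fWord ρ w 0 + ρ ^ w.length • x := by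
  induction w with
  | nil => simp [fWord]
  | cons i w ih => simp only [fWord, f, ih, List.length_cons, pow_succ', mul_smul]; module

lemma isHomeomorph_fWord (hρ : ρ ≠ 0) (w : List (Fin 3)) : IsHomeomorph (fWord ρ w) := by
  have : fWord ρ w = (fWord ρ w 0 + ·) ∘ (ρ ^ w.length • ·) := funext (fWord_eq_add_smul w)
  rw [this]
  exact (Homeomorph.addLeft _).isHomeomorph.comp (isHomeomorph_smul₀ (pow_ne_zero _ hρ))

lemma bary_fWord_le (hρ0 : 0 ≤ ρ) (hρ1 : ρ ≤ 1) (i : Fin 3) (w : List (Fin 3)) (x : ℝ²) :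
    bary i (fWord ρ w x) ≤ 1 - ρ ^ w.length * (1 - bary i x) := by
  induction w with
  | nil => simp [fWord]
  | cons j w ih =>
    rw [fWord, bary_f, List.length_cons, pow_succ']
    nlinarith [bary_vertex_le_one i j]

lemma pow_le_dist_fWord_centroid_of_ne (hρ0 : 0 ≤ ρ) (hρ : ρ ≤ 1 / 2) :
    ∀ (w u : List (Fin 3)), u.length = w.length → u ≠ w → ∀ x ∈ sierpT,
      √3 / 3 * ρ ^ w.length ≤ dist (fWord ρ w centroid) (fWord ρ u x)
  | [], [], _, hne, _, _ => absurd rfl hne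
  | i :: w, j :: u, hlen, hne, x, hx => by
    by_cases hij : i = j
    · subst hij
      have ih := pow_le_dist_fWord_centroid_of_ne hρ0 hρ w u (by simpa using hlen)
        (fun h => hne (h ▸ rfl)) x hx
      rw [fWord, fWord, dist_f hρ0, List.length_cons, pow_succ]
      nlinarith
    · have hfar : 1 - ρ ≤ bary j (fWord ρ (j :: u) x) := by
        rw [fWord, bary_f, bary_vertex, if_pos rfl]
        nlinarith [mem_sierpT_iff.1 (fWord_mem_sierpT hρ0 (by linarith) u hx) j]
      have hnear : bary j (fWord ρ (i :: w) centroid) ≤ ρ * (1 - ρ ^ w.length * (2 / 3)) := by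
        rw [fWord, bary_f, bary_vertex, if_neg (Ne.symm hij)]
        have := bary_fWord_le hρ0 (by linarith) j w centroid
        rw [bary_centroid] at this
        nlinarith
      calc √3 / 3 * ρ ^ (i :: w).length
          ≤ √3 / 2 * ((1 - ρ) - ρ * (1 - ρ ^ w.length * (2 / 3))) := by
            rw [List.length_cons, pow_succ]
            nlinarith [mul_nonneg (Real.sqrt_nonneg 3) (by linarith : 0 ≤ 1 - 2 * ρ)]
        _ ≤ √3 / 2 * (bary j (fWord ρ (j :: u) x) - bary j (fWord ρ (i :: w) centroid)) := by
            gcongr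
        _ ≤ dist (fWord ρ (i :: w) centroid) (fWord ρ (j :: u) x) := by
            rw [dist_comm]; exact bary_sub_le_dist j _ _

lemma sqrt_le_dist_centroid (hρ0 : 0 ≤ ρ) (hρ : ρ ≤ 1 / 2) {y : ℝ²}
    (hy : y ∈ (sierpPhi ρ)^[2] sierpT) :
    √(1 / 3 - ρ + ρ ^ 2 - ρ ^ 3 + ρ ^ 4) ≤ dist centroid y := by
  rw [Function.iterate_succ_apply', Function.iterate_one] at hy
  obtain ⟨a, x, hx, rfl⟩ := mem_sierpPhi.1 hy
  obtain ⟨b, z, hz, rfl⟩ := mem_sierpPhi.1 hx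
  refine Real.sqrt_le_iff.2 ⟨dist_nonneg, ?_⟩
  have hz := mem_sierpT_iff.1 hz
  by_cases hab : a = b
  · subst hab
    obtain ⟨c, hca⟩ := exists_ne a
    rw [dist_comm, dist_sq_eq_bary hca.symm]
    simp only [bary_centroid, bary_f, bary_vertex, ↓reduceIte, if_neg hca, mul_one, mul_zero,
      zero_add]
    have hs := hz a
    have ht := hz c
    generalize bary a z = s at *
    generalize bary c z = t at *
    set A := 1 - ρ + ρ * (1 - ρ + ρ * s) - 1 / 3 with hA_def
    set C := ρ * (ρ * t) - 1 / 3
    -- `A² + AC + C² ≥ 3A²/4` and `A ≥ 2/3 - ρ² ≥ 0`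
    have hA : 2 / 3 - ρ ^ 2 ≤ A := by rw [hA_def]; nlinarith
    nlinarith [mul_self_le_mul_self (by nlinarith) hA, sq_nonneg (C + A / 2),
      mul_nonneg hρ0 (by nlinarith : 0 ≤ (1 - ρ) ^ 2 - ρ ^ 3 / 4)]
  · rw [dist_comm, dist_sq_eq_bary hab]
    simp only [bary_centroid, bary_f, bary_vertex, ↓reduceIte, if_neg hab, if_neg (Ne.symm hab),
      mul_one, mul_zero, zero_add]
    have hs := hz a
    have ht := hz b
    generalize bary a z = s at *
    generalize bary b z = t at *
    have hs' : 0 ≤ ρ ^ 2 * s := by positivity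
    have ht' : 0 ≤ ρ ^ 2 * t := by positivity
    -- the minimum is at `s = t = 0`, the vertex `fₐ(f_b(v_c))`
    nlinarith [mul_nonneg hs' (by nlinarith : 0 ≤ 1 - ρ - ρ ^ 2),
      mul_nonneg ht' (by nlinarith : 0 ≤ ρ - 2 * ρ ^ 2), mul_nonneg hs' ht']

lemma pow_mul_sqrt_le_dist_fWord_centroid (hρ0 : 0 ≤ ρ) (hρ : ρ ≤ 1 / 2) (w : List (Fin 3)) {y : ℝ²}
    (hy : y ∈ sierpinski ρ) :
    ρ ^ w.length * √(1 / 3 - ρ + ρ ^ 2 - ρ ^ 3 + ρ ^ 4) ≤ dist (fWord ρ w centroid) y := by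
  have hy' : y ∈ (sierpPhi ρ)^[w.length] ((sierpPhi ρ)^[2] sierpT) := by
    rw [← Function.iterate_add_apply]; exact mem_iInter.1 hy _
  obtain ⟨u, hu, x, hx, rfl⟩ := exists_fWord_of_mem_iterate hy'
  by_cases huw : u = w
  · subst huw
    rw [dist_fWord hρ0]
    exact mul_le_mul_of_nonneg_left (sqrt_le_dist_centroid hρ0 hρ hx) (by positivity)
  · have hsqrt : √(1 / 3 - ρ + ρ ^ 2 - ρ ^ 3 + ρ ^ 4) ≤ √3 / 3 := by
      refine Real.sqrt_le_iff.2 ⟨by positivity, ?_⟩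
      rw [div_pow, sqrt_three_sq]
      nlinarith [mul_nonneg (mul_nonneg hρ0 (by linarith : 0 ≤ 1 - ρ)) (sq_nonneg ρ)]
    calc ρ ^ w.length * √(1 / 3 - ρ + ρ ^ 2 - ρ ^ 3 + ρ ^ 4) ≤ √3 / 3 * ρ ^ w.length := by
          rw [mul_comm]; gcongr
      _ ≤ dist (fWord ρ w centroid) (fWord ρ u x) :=
          pow_le_dist_fWord_centroid_of_ne hρ0 hρ w u hu huw x
            (antitone_iterate_sierpPhi hρ0 (by linarith) (Nat.zero_le 2) hx)

lemma fWord_centroid_notMem_cthickening (hρ0 : 0 ≤ ρ) (hρ : ρ ≤ 1 / 2) {ε : ℝ} (hε : 0 ≤ ε)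
    (w : List (Fin 3)) (hεw : ε < ρ ^ w.length * √(1 / 3 - ρ + ρ ^ 2 - ρ ^ 3 + ρ ^ 4)) :
    fWord ρ w centroid ∉ cthickening ε (sierpinski ρ) := by
  rw [mem_cthickening_iff, not_le]
  calc ENNReal.ofReal ε < ENNReal.ofReal (ρ ^ w.length * √(1 / 3 - ρ + ρ ^ 2 - ρ ^ 3 + ρ ^ 4)) :=
        (ENNReal.ofReal_lt_ofReal_iff_of_nonneg hε).2 hεw
    _ ≤ infEDist (fWord ρ w centroid) (sierpinski ρ) := le_infEDist.2 fun y hy => by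
        rw [edist_dist]
        exact ENNReal.ofReal_le_ofReal (pow_mul_sqrt_le_dist_fWord_centroid hρ0 hρ w hy)

lemma dist_lineMap_vertex (a b : Fin 3) (hab : a ≠ b) (s t : ℝ) :
    dist (AffineMap.lineMap (vertex a) (vertex b) s) (AffineMap.lineMap (vertex a) (vertex b) t) =
      |s - t| := by
  rw [dist_lineMap_lineMap, dist_vertex hab, mul_one, Real.dist_eq]

lemma exists_mem_sierpinski_dist_lineMap_le (hρ0 : 0 < ρ) (hρ : ρ ≤ 1 / 2) (n : ℕ) {a b : Fin 3}
    (hab : a ≠ b) {t : ℝ} (ht : t ∈ Icc (0 : ℝ) 1) :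
    ∃ s ∈ sierpinski ρ,
      dist (AffineMap.lineMap (vertex a) (vertex b) t) s ≤ max (1 / 2 - ρ) (ρ ^ n / 2) := by
  induction n generalizing a b t with
  | zero =>
    wlog ht' : t ≤ 1 / 2 generalizing a b t with H
    · obtain ⟨s, hs, hd⟩ :=
        H hab.symm (t := 1 - t) ⟨by linarith [ht.2], by linarith [ht.1]⟩ (by linarith)
      exact ⟨s, hs, by rwa [AffineMap.lineMap_apply_one_sub] at hd⟩
    refine ⟨vertex a, vertex_mem_sierpinski a, ?_⟩
    rw [dist_lineMap_left, dist_vertex hab, mul_one, Real.norm_of_nonneg ht.1, pow_zero]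
    exact le_max_of_le_right ht'
  | succ n ih =>
    wlog ht' : t ≤ 1 / 2 generalizing a b t with H
    · obtain ⟨s, hs, hd⟩ :=
        H hab.symm (t := 1 - t) ⟨by linarith [ht.2], by linarith [ht.1]⟩ (by linarith)
      exact ⟨s, hs, by rwa [AffineMap.lineMap_apply_one_sub] at hd⟩
    by_cases htρ : t ≤ ρ
    · obtain ⟨s, hs, hd⟩ := ih hab (t := t / ρ) ⟨div_nonneg ht.1 hρ0.le, (div_le_one hρ0).2 htρ⟩
      refine ⟨f ρ a s, f_mem_sierpinski hρ0.le (by linarith) a hs, ?_⟩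
      rw [← mul_div_cancel₀ t hρ0.ne', ← f_lineMap_vertex, dist_f hρ0.le]
      refine (mul_le_mul_of_nonneg_left hd hρ0.le).trans ?_
      rw [mul_max_of_nonneg _ _ hρ0.le, pow_succ]
      exact max_le_max (by nlinarith) (by linarith)
    · refine ⟨f ρ a (vertex b),
        f_mem_sierpinski hρ0.le (by linarith) a (vertex_mem_sierpinski b), ?_⟩
      have : f ρ a (vertex b) = AffineMap.lineMap (vertex a) (vertex b) ρ := by
        simpa using f_lineMap_vertex (ρ := ρ) a b 1
      rw [this, dist_lineMap_vertex a b hab, abs_of_nonneg (by linarith)]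
      exact le_max_of_le_left (by linarith)

lemma exists_lineMap_eq_of_mem_frontier {p : ℝ²} (hp : p ∈ frontier sierpT) :
    ∃ a b, a ≠ b ∧ ∃ t ∈ Icc (0 : ℝ) 1, AffineMap.lineMap (vertex a) (vertex b) t = p := by
  have hpT := mem_sierpT_iff.1 (isCompact_sierpT.isClosed.frontier_subset hp)
  obtain ⟨c, hc⟩ : ∃ c, bary c p = 0 := by
    by_contra! h
    refine hp.2 (interior_maximal (t := {q | ∀ i, 0 < bary i q}) (fun q hq => ?_) ?_ ?_)
    · exact mem_sierpT_iff.2 fun i => (hq i).le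
    · simp only [ofPred_forall]
      exact isOpen_iInter_of_finite fun i => isOpen_lt continuous_const (continuous_bary i)
    · exact fun i => (hpT i).lt_of_ne (h i).symm
  have hsum := sum_bary p
  have hrep := sum_bary_smul_vertex p
  simp only [Fin.sum_univ_three] at hsum hrep
  match c, hc with
  | 0, hc =>
    refine ⟨1, 2, by decide, bary 2 p, ⟨hpT 2, by linarith [hpT 1]⟩, ?_⟩
    rw [AffineMap.lineMap_apply_module, ← show bary 1 p = 1 - bary 2 p by linarith]
    rwa [hc, zero_smul, zero_add] at hrep
  | 1, hc =>
    refine ⟨0, 2, by decide, bary 2 p, ⟨hpT 2, by linarith [hpT 0]⟩, ?_⟩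
    rw [AffineMap.lineMap_apply_module, ← show bary 0 p = 1 - bary 2 p by linarith]
    rwa [hc, zero_smul, add_zero] at hrep
  | 2, hc =>
    refine ⟨0, 1, by decide, bary 1 p, ⟨hpT 1, by linarith [hpT 0]⟩, ?_⟩
    rw [AffineMap.lineMap_apply_module, ← show bary 0 p = 1 - bary 1 p by linarith]
    rwa [hc, zero_smul, add_zero] at hrep

lemma fWord_image_frontier_subset_cthickening (hρ0 : 0 < ρ) (hρ : ρ ≤ 1 / 2) {ε : ℝ}
    (w : List (Fin 3)) (hεw : ρ ^ w.length * (1 / 2 - ρ) < ε) :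
    fWord ρ w '' frontier sierpT ⊆ cthickening ε (sierpinski ρ) := by
  rintro _ ⟨p, hp, rfl⟩
  obtain ⟨a, b, hab, t, ht, rfl⟩ := exists_lineMap_eq_of_mem_frontier hp
  have hr : 0 < ρ ^ w.length := pow_pos hρ0 _
  have hε : 0 < ε := lt_of_le_of_lt (mul_nonneg hr.le (by linarith)) hεw
  obtain ⟨n, hn⟩ := exists_pow_lt_of_lt_one (div_pos hε hr) (by linarith : ρ < 1)
  obtain ⟨s, hs, hd⟩ := exists_mem_sierpinski_dist_lineMap_le hρ0 hρ n hab ht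
  refine mem_cthickening_of_dist_le _ _ _ _ (fWord_mem_sierpinski hρ0.le (by linarith) w hs) ?_
  rw [dist_fWord hρ0.le]
  refine (mul_le_mul_of_nonneg_left hd hr.le).trans ?_
  rw [mul_max_of_nonneg _ _ hr.le]
  rw [lt_div_iff₀ hr] at hn
  exact max_le hεw.le (by nlinarith [pow_nonneg hρ0.le n])

lemma connectedComponentIn_subset_fWord_image (hρ0 : 0 < ρ) (hρ : ρ ≤ 1 / 2) {ε : ℝ}
    (w : List (Fin 3)) (hεw : ρ ^ w.length * (1 / 2 - ρ) < ε) :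
    connectedComponentIn (cthickening ε (sierpinski ρ))ᶜ (fWord ρ w centroid) ⊆
      fWord ρ w '' sierpT := by
  refine connectedComponentIn_subset_of_disjoint_frontier ⟨centroid, centroid_mem_sierpT, rfl⟩ ?_
  rw [← (isHomeomorph_fWord hρ0.ne' w).image_frontier]
  exact disjoint_compl_left.mono_right (fWord_image_frontier_subset_cthickening hρ0 hρ w hεw)

end Sierpinski

open Sierpinski in
/-- For every natural number `k`, if
`ρ^k·(1/2 − ρ) < ε < ρ^k·√(1/3 − ρ + ρ² − ρ³ + ρ⁴)`, then the complement
`ℝ² \ S_ε` has at least `3^k` distinct connected components that are bounded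
sets. -/
theorem sierpinski_complement_bounded_components
    (ρ : ℝ) (hρ0 : 0 < ρ) (hρ : ρ ≤ 1 / 2) (k : ℕ) (ε : ℝ)
    (hε1 : ρ ^ k * (1 / 2 - ρ) < ε)
    (hε2 : ε < ρ ^ k * Real.sqrt (1 / 3 - ρ + ρ ^ 2 - ρ ^ 3 + ρ ^ 4)) :
    ∃ 𝒞 : Finset (Set (EuclideanSpace ℝ (Fin 2))),
      3 ^ k ≤ 𝒞.card ∧
      ∀ C ∈ 𝒞,
        (∃ p ∈ (Metric.cthickening ε (sierpinski ρ))ᶜ,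
          C = connectedComponentIn (Metric.cthickening ε (sierpinski ρ))ᶜ p) ∧
        Bornology.IsBounded C := by
  have hε : 0 ≤ ε := le_trans (mul_nonneg (by positivity) (by linarith)) hε1.le
  set U := (cthickening ε (sierpinski ρ))ᶜ
  let component (w : List.Vector (Fin 3) k) := connectedComponentIn U (fWord ρ w.toList centroid)
  have hcenter (w : List.Vector (Fin 3) k) : fWord ρ w.toList centroid ∈ U :=
    fWord_centroid_notMem_cthickening hρ0.le hρ hε _ (by rwa [w.toList_length])
  have hsub (w : List.Vector (Fin 3) k) : component w ⊆ fWord ρ w.toList '' sierpT :=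
    connectedComponentIn_subset_fWord_image hρ0 hρ _ (by rwa [w.toList_length])
  have hinj : Function.Injective component := by
    intro u w huw
    by_contra hne
    have hw : fWord ρ w.toList centroid ∈ component u := huw ▸ mem_connectedComponentIn (hcenter w)
    obtain ⟨x, hx, hxw⟩ := hsub u hw
    have := pow_le_dist_fWord_centroid_of_ne hρ0.le hρ w.toList u.toList (by simp)
      (fun h => hne (List.Vector.eq _ _ h)) x hx
    rw [hxw, dist_self] at this
    exact this.not_gt (by positivity)
  refine ⟨Finset.univ.image component, ?_, ?_⟩
  · rw [Finset.card_image_of_injective _ hinj, Finset.card_univ, card_vector, Fintype.card_fin]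
  · simp only [Finset.mem_image, Finset.mem_univ, true_and]
    rintro _ ⟨w, rfl⟩
    exact ⟨⟨_, hcenter w, rfl⟩, (isCompact_sierpT.image
      (isHomeomorph_fWord hρ0.ne' _).continuous).isBounded.subset (hsub w)⟩
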